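/- If f ∈ B satisfies ∂f ∈ K and ℒ₋₁f ∈ K, then f ∈ K. If, in addition, there exists λ ∈ K such that λ·ℒ₀f = f, then f = 0. -/

import Mathlib

/- STATEMENT 0.
K = ℚ((ε)), B = K[[t₀,t₁,…]].  ∂ₖ = ∂/∂tₖ, ∂ = ∂₀,
ℒ₋₁ = Σ_{k≥0} t_{k+1}∂ₖ − ∂₀ and ℒ₀ = Σ_{k≥0} (k+1/2)tₖ∂ₖ − (3/2)∂₁.
If ∂f and ℒ₋₁f are constant then f is constant; if moreover λ·ℒ₀f = f for
some λ ∈ K, then f = 0. -/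

noncomputable section

/-- `K = ℚ((ε))`, the field of formal Laurent series over `ℚ`. -/
abbrev K : Type := LaurentSeries ℚ

/-- The large phase space `B = K[[t₀,t₁,…]]`. -/
abbrev B : Type := MvPowerSeries ℕ K

/-- coefficient extraction (a power series is a function on monomials). -/
def cf (f : B) (m : ℕ →₀ ℕ) : K := f m

/-- build a power series from its coefficients. -/
def mk' (c : (ℕ →₀ ℕ) → K) : B := c

/-- `∂ₖ = ∂/∂tₖ`, defined coefficientwise. -/
def pd (k : ℕ) (f : B) : B :=
  mk' fun m => ((m k : K) + 1) * cf f (m + Finsupp.single k 1)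

/-- `ℒ₋₁ = Σ_{k≥0} t_{k+1}∂ₖ − ∂₀`; the coefficient of a monomial `m` in
`t_{k+1}·∂ₖf` is nonzero only when `t_{k+1}` divides `m`, so the infinite sum is
well defined coefficientwise. -/
def Lm1 (f : B) : B :=
  mk' (fun m => ∑ j ∈ m.support, if 1 ≤ j then cf (pd (j - 1) f) (m - Finsupp.single j 1) else 0)
    - pd 0 f

/-- `ℒ₀ = Σ_{k≥0} (k+1/2)tₖ∂ₖ − (3/2)∂₁`, defined coefficientwise. -/
def L0 (f : B) : B :=
  mk' (fun m => ∑ j ∈ m.support,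
      (algebraMap ℚ K ((j : ℚ) + 1/2)) * cf (pd j f) (m - Finsupp.single j 1))
    - (3/2 : ℚ) • pd 1 f

/-- `f ∈ B` is constant when it lies in `K`. -/
def IsConst (f : B) : Prop := ∃ c : K, f = MvPowerSeries.C c

namespace SDR

lemma castSuccNe (n : ℕ) : ((n : K) + 1) ≠ 0 := by
  have h : ((n : K) + 1) = algebraMap ℚ K ((n : ℚ) + 1) := by
    rw [map_add, map_natCast, map_one]
  rw [h]
  intro hz
  have h2 : ((n : ℚ) + 1) = 0 := (algebraMap ℚ K).injective (by rw [hz, map_zero])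
  have h3 : (0:ℚ) < (n : ℚ) + 1 := by positivity
  rw [h2] at h3
  exact lt_irrefl _ h3

lemma castNe (n : ℕ) (h : n ≠ 0) : ((n : K)) ≠ 0 := by
  have hh : ((n : K)) = algebraMap ℚ K ((n : ℚ)) := by rw [map_natCast]
  rw [hh]
  intro hz
  have h2 : ((n : ℚ)) = 0 := (algebraMap ℚ K).injective (by rw [hz, map_zero])
  exact h (by exact_mod_cast h2)

abbrev e (k : ℕ) : ℕ →₀ ℕ := Finsupp.single k 1

lemma C_apply (c : K) (m : ℕ →₀ ℕ) : (MvPowerSeries.C (σ := ℕ) c) m = if m = 0 then c else 0 := by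
  rw [show (MvPowerSeries.C (σ := ℕ) c) m = MvPowerSeries.coeff m (MvPowerSeries.C (σ := ℕ) c) from rfl,
    MvPowerSeries.coeff_C]

lemma subAddCancel {m : ℕ →₀ ℕ} {i : ℕ} (h : 1 ≤ m i) : m - e i + e i = m := by
  ext a
  rw [Finsupp.add_apply, Finsupp.tsub_apply]
  rcases eq_or_ne i a with rfl | ha
  · simp [Finsupp.single_apply]; omega
  · simp [Finsupp.single_apply, ha]

lemma addSubCancel (m : ℕ →₀ ℕ) (i : ℕ) : m + e i - e i = m := by
  ext a
  rw [Finsupp.tsub_apply, Finsupp.add_apply]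
  simp

lemma ne_zero_of_apply {m : ℕ →₀ ℕ} {a : ℕ} (h : m a ≠ 0) : m ≠ 0 := by
  intro h0; rw [h0] at h; simp at h

def w (m : ℕ →₀ ℕ) : ℕ := ∑ k ∈ m.support, k * m k
def mu (m : ℕ →₀ ℕ) : ℕ := ∑ k ∈ m.support, k * k * m k

lemma w_eq_sum (m : ℕ →₀ ℕ) : w m = m.sum fun k v => k * v := by
  rw [Finsupp.sum]; rfl

lemma mu_eq_sum (m : ℕ →₀ ℕ) : mu m = m.sum fun k v => k * k * v := by
  rw [Finsupp.sum]; rfl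

lemma w_add (a b : ℕ →₀ ℕ) : w (a + b) = w a + w b := by
  rw [w_eq_sum, w_eq_sum, w_eq_sum]
  rw [Finsupp.sum_add_index] <;> intros <;> simp [Nat.mul_add]

lemma mu_add (a b : ℕ →₀ ℕ) : mu (a + b) = mu a + mu b := by
  rw [mu_eq_sum, mu_eq_sum, mu_eq_sum]
  rw [Finsupp.sum_add_index] <;> intros <;> simp [Nat.mul_add]

lemma w_single (k : ℕ) : w (e k) = k := by
  rw [w_eq_sum]; rw [Finsupp.sum_single_index] <;> simp

lemma mu_single (k : ℕ) : mu (e k) = k * k := by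
  rw [mu_eq_sum]; rw [Finsupp.sum_single_index] <;> simp

lemma w_sub_add {m : ℕ →₀ ℕ} {i : ℕ} (h : 1 ≤ m i) : w (m - e i) + i = w m := by
  have h1 := w_add (m - e i) (e i)
  rw [subAddCancel h, w_single] at h1
  omega

lemma mu_sub_add {m : ℕ →₀ ℕ} {i : ℕ} (h : 1 ≤ m i) : mu (m - e i) + i * i = mu m := by
  have h1 := mu_add (m - e i) (e i)
  rw [subAddCancel h, mu_single] at h1
  omega

lemma le_w {m : ℕ →₀ ℕ} {k : ℕ} (h : k ∈ m.support) : k * m k ≤ w m :=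
  Finset.single_le_sum (f := fun k => k * m k) (fun i _ => Nat.zero_le _) h

lemma mu_le (m : ℕ →₀ ℕ) : mu m ≤ w m * w m := by
  unfold mu
  calc ∑ k ∈ m.support, k * k * m k ≤ ∑ k ∈ m.support, w m * (k * m k) := by
        apply Finset.sum_le_sum
        intro k hk
        rw [mul_assoc]
        apply Nat.mul_le_mul_right
        have hpos : 1 ≤ m k := Nat.pos_of_ne_zero (Finsupp.mem_support_iff.1 hk)
        calc k = k * 1 := (Nat.mul_one k).symm
          _ ≤ k * m k := Nat.mul_le_mul (le_refl k) hpos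
          _ ≤ w m := le_w hk
    _ = w m * w m := by rw [← Finset.mul_sum]; rfl

end SDR


open SDR in
theorem string_dilaton_rigidity (f : B)
    (h1 : IsConst (pd 0 f)) (h2 : IsConst (Lm1 f)) :
    IsConst f ∧ ((∃ lam : K, lam • L0 f = f) → f = 0) := by
  obtain ⟨c1, hc1⟩ := h1
  have hf0 : ∀ m : ℕ →₀ ℕ, m ≠ 0 → f (m + e 0) = 0 := by
    intro m hm
    have h' : ((m 0 : K) + 1) * f (m + e 0) = 0 := by
      have := congrFun hc1 m
      rw [C_apply, if_neg hm] at this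
      exact this
    exact (mul_eq_zero.1 h').resolve_left (castSuccNe _)
  obtain ⟨c2, hc2⟩ := h2
  have hS : ∀ n : ℕ →₀ ℕ, n ≠ 0 →
      (∑ j ∈ n.support, if 1 ≤ j then
        (((n - e j) (j-1) : K) + 1) * f (n - e j + e (j-1)) else 0) = 0 := by
    intro n hn
    have := congrFun hc2 n
    rw [C_apply, if_neg hn] at this
    have hpd : pd 0 f n = 0 := by
      show ((n 0 : K) + 1) * f (n + e 0) = 0
      rw [hf0 n hn, mul_zero]
    have hsub : (Lm1 f) n =
        (∑ j ∈ n.support, if 1 ≤ j then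
          (((n - e j) (j-1) : K) + 1) * f (n - e j + e (j-1)) else 0) - pd 0 f n := rfl
    rw [hsub, hpd, sub_zero] at this
    exact this
  have hfe0 : f (e 0) = 0 := by
    have h' := hS (e 1) (by simp [e, Finsupp.single_eq_zero])
    rw [Finsupp.support_single_ne_zero 1 one_ne_zero, Finset.sum_singleton, if_pos le_rfl] at h'
    have he : e 1 - e 1 = (0 : ℕ →₀ ℕ) := by
      ext a; rw [Finsupp.tsub_apply]; simp
    rw [he] at h'
    simpa using h'
  -- main vanishing for m with m 0 = 0 by induction
  have key : ∀ N : ℕ, ∀ m : ℕ →₀ ℕ, w m * w m - mu m < N → m 0 = 0 → m ≠ 0 → f m = 0 := by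
    intro N
    induction N with
    | zero => intro m h; omega
    | succ N ih =>
      intro m hlt h0 hm
      have hsupp : m.support.Nonempty := Finsupp.support_nonempty_iff.2 hm
      set j := m.support.max' hsupp with hj
      have hjmem : j ∈ m.support := m.support.max'_mem hsupp
      have hjmax : ∀ i ∈ m.support, i ≤ j := fun i hi => m.support.le_max' i hi
      have hmj : 1 ≤ m j := Nat.pos_of_ne_zero (Finsupp.mem_support_iff.1 hjmem)
      have hj1 : 1 ≤ j := by
        rcases Nat.eq_zero_or_pos j with h | h
        · exfalso
          rw [h] at hmj
          rw [Finsupp.mem_support_iff, h] at hjmem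
          exact hjmem h0
        · exact h
      have hmj1 : m (j+1) = 0 := by
        by_contra h
        have := hjmax (j+1) (Finsupp.mem_support_iff.2 h)
        omega
      set n := m - e j + e (j+1) with hn
      have hnval : ∀ a, n a = (m a - if j = a then 1 else 0) + (if j + 1 = a then 1 else 0) := by
        intro a
        rw [hn, Finsupp.add_apply, Finsupp.tsub_apply]
        simp only [e, Finsupp.single_apply]
      have hnj1 : n (j+1) = 1 := by
        rw [hnval, if_pos rfl, if_neg (show j ≠ j + 1 by omega), hmj1]
      have hn0val : n 0 = 0 := by
        rw [hnval, if_neg (show j ≠ 0 by omega), if_neg (show j + 1 ≠ 0 by omega), h0]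
      have hn0 : n ≠ 0 := ne_zero_of_apply (a := j+1) (by omega)
      have hkey1 : n - e (j+1) = m - e j := by
        rw [hn, addSubCancel]
      have hmjval : (m - e j) j = m j - 1 := by
        rw [Finsupp.tsub_apply]; simp [e, Finsupp.single_apply]
      have hsum := hS n hn0
      have hj1mem : j + 1 ∈ n.support := Finsupp.mem_support_iff.2 (by omega)
      rw [← Finset.add_sum_erase _ _ hj1mem] at hsum
      have hother : ∀ i ∈ n.support.erase (j+1),
          (if 1 ≤ i then (((n - e i) (i-1) : K) + 1) * f (n - e i + e (i-1)) else 0) = 0 := by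
        intro i hi
        have hine : i ≠ j + 1 := Finset.ne_of_mem_erase hi
        have hin : i ∈ n.support := Finset.mem_of_mem_erase hi
        have hni : 1 ≤ n i := Nat.pos_of_ne_zero (Finsupp.mem_support_iff.1 hin)
        have hilej : i ≤ j := by
          have hmi : 1 ≤ m i := by
            rcases eq_or_ne j i with rfl | hji
            · exact hmj
            · have h' := hnval i
              rw [if_neg hji, if_neg (fun h => hine h.symm)] at h'
              omega
          exact hjmax i (Finsupp.mem_support_iff.2 (by omega))
        have hi1 : 1 ≤ i := by
          by_contra h
          have hi0 : i = 0 := by omega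
          rw [hi0, hn0val] at hni
          omega
        rw [if_pos hi1]
        have hval : f (n - e i + e (i-1)) = 0 := by
          rcases eq_or_ne i 1 with rfl | hi2
          · have hne : n - e 1 ≠ 0 := by
              apply ne_zero_of_apply (a := j+1)
              rw [Finsupp.tsub_apply]
              simp only [e, Finsupp.single_apply]
              rw [if_neg (show (1:ℕ) ≠ j + 1 by omega), hnj1]
              omega
            simpa using hf0 (n - e 1) hne
          · obtain ⟨d, rfl⟩ : ∃ d, i = d + 1 := ⟨i - 1, by omega⟩
            have hd1 : 1 ≤ d := by omega
            rw [show d + 1 - 1 = d from rfl]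
            set m'' := n - e (d+1) + e d with hm''
            have hm''i : ∀ a, m'' a = (n a - if d + 1 = a then 1 else 0) + (if d = a then 1 else 0) := by
              intro a
              rw [hm'', Finsupp.add_apply, Finsupp.tsub_apply]
              simp only [e, Finsupp.single_apply]
            have hm''0 : m'' 0 = 0 := by
              rw [hm''i, if_neg (show d + 1 ≠ 0 by omega), if_neg (show d ≠ 0 by omega), hn0val]
            have hm''j1 : m'' (j+1) = 1 := by
              rw [hm''i, if_neg (show d + 1 ≠ j + 1 by omega),
                if_neg (show d ≠ j + 1 by omega), hnj1]
            have hm''ne : m'' ≠ 0 := ne_zero_of_apply (a := j+1) (by omega)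
            -- weights
            have e1 := w_sub_add hmj      -- w (m - e j) + j = w m
            have e2 : w n = w (m - e j) + (j+1) := by
              rw [hn, w_add, w_single]
            have e3 := mu_sub_add hmj     -- mu (m - e j) + j*j = mu m
            have e4 : mu n = mu (m - e j) + (j+1)*(j+1) := by
              rw [hn, mu_add, mu_single]
            have e5 := w_sub_add hni      -- w (n - e (d+1)) + (d+1) = w n
            have e6 : w m'' = w (n - e (d+1)) + d := by
              rw [hm'', w_add, w_single]
            have e7 := mu_sub_add hni
            have e8 : mu m'' = mu (n - e (d+1)) + d*d := by
              rw [hm'', mu_add, mu_single]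
            have e9 : (j+1)*(j+1) = j*j + 2*j + 1 := by ring
            have e10 : (d+1)*(d+1) = d*d + 2*d + 1 := by ring
            have e11 : mu m'' ≤ w m'' * w m'' := mu_le m''
            have e12 : w m'' = w m := by omega
            rw [e12] at e11
            -- mu m'' = mu m + 2*(j - d) ≥ mu m + 2 since d ≤ j - 1... d+1 ≤ j
            have hdj : d + 1 ≤ j := by omega
            refine ih m'' ?_ hm''0 hm''ne
            rw [e12]
            omega
        rw [hval, mul_zero]
      rw [Finset.sum_eq_zero hother, add_zero, if_pos (show 1 ≤ j + 1 by omega)] at hsum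
      rw [show j + 1 - 1 = j from rfl, hkey1, subAddCancel hmj, hmjval] at hsum
      have hcast : ((m j - 1 : ℕ) : K) + 1 = (m j : K) := by
        have h' := Nat.sub_add_cancel hmj
        exact_mod_cast congrArg (Nat.cast : ℕ → K) h'
      rw [hcast] at hsum
      exact (mul_eq_zero.1 hsum).resolve_left (castNe _ (by omega))
  have hvanish : ∀ m : ℕ →₀ ℕ, m ≠ 0 → f m = 0 := by
    intro m hm
    rcases Nat.eq_zero_or_pos (m 0) with h | h
    · exact key (w m * w m - mu m + 1) m (by omega) h hm
    · rcases eq_or_ne (m - e 0) 0 with h' | h'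
      · have hme : m = e 0 := by
          rw [← subAddCancel h, h', zero_add]
        rw [hme]; exact hfe0
      · have := hf0 (m - e 0) h'
        rwa [subAddCancel h] at this
  constructor
  · refine ⟨f 0, ?_⟩
    funext m
    rw [C_apply]
    split
    · next h => rw [h]
    · next h => exact hvanish m h
  · rintro ⟨lam, hlam⟩
    have hpd : ∀ k : ℕ, pd k f = 0 := by
      intro k
      funext m
      have hne : m + e k ≠ 0 := by
        apply ne_zero_of_apply (a := k)
        rw [Finsupp.add_apply]
        simp [e]
      show ((m k : K) + 1) * f (m + e k) = 0
      rw [hvanish _ hne, mul_zero]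
    have hL0 : L0 f = 0 := by
      unfold L0
      rw [hpd 1, Algebra.smul_def, mul_zero, sub_zero]
      funext m
      show (∑ j ∈ m.support,
        (algebraMap ℚ K ((j : ℚ) + 1/2)) * cf (pd j f) (m - Finsupp.single j 1)) = 0
      apply Finset.sum_eq_zero
      intro j _
      rw [hpd j]
      show _ * (0 : B) (m - Finsupp.single j 1) = 0
      rw [show ((0 : B)) (m - Finsupp.single j 1) = 0 from rfl, mul_zero]
    rw [hL0, Algebra.smul_def, mul_zero] at hlam
    exact hlam.symm

end
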